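/- For any ξ, η ∈ ℝ and u, v ∈ 𝔻, if |λ + 1| ≤ 2ρ(u,v), where λ = e^{i(η−ξ)}·(1−ū·v)/(1−u·v̄), then sup_{z∈𝔻} |f_{ξ,u}(z) − f_{η,v}(z)| = 2. -/

import Mathlib

open Complex

noncomputable section

def unitDisk : Set ℂ := {z : ℂ | ‖z‖ < 1}

noncomputable def autMap (ξ : ℝ) (u z : ℂ) : ℂ :=
  Complex.exp (Complex.I * ξ) * ((z - u) / (1 - (starRingEnd ℂ) u * z))

noncomputable def pseudoHyp (u v : ℂ) : ℝ :=
  ‖(u - v) / (1 - (starRingEnd ℂ) u * v)‖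

/-!
On the closed disk both automorphisms have modulus at most one, so the supremum is at most 2, and
it equals 2 as soon as `f_{ξ,u}(z) = -f_{η,v}(z)` at some `z` of the unit circle (both maps extend
continuously there). Clearing denominators, this is the quadratic `A z² - B z + μ Ā = 0` with
`μ = e^{i(η-ξ)}`, `A = v̄ + μ ū`, `B = 1 + μ + u v̄ + μ ū v`. Since `μ B̄ = B` the quadratic is
self-inversive, and such a quadratic has a root on the unit circle when `|B| ≤ 2|A|`. The identity
`|B|² - 4|A|² = |μ(1 - ū v) + (1 - u v̄)|² - 4|u - v|²` shows that this is the hypothesis.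
-/

theorem ContinuousWithinAt.ciSup_eq_of_forall_le {X : Type*} [TopologicalSpace X] {s : Set X}
    {F : X → ℝ} {x₀ : X} (hF : ContinuousWithinAt F s x₀) (hx₀ : x₀ ∈ closure s)
    (hle : ∀ x ∈ s, F x ≤ F x₀) : ⨆ x : s, F x = F x₀ := by
  have : Nonempty s := (closure_nonempty_iff.mp ⟨x₀, hx₀⟩).to_subtype
  have : (nhdsWithin x₀ s).NeBot := mem_closure_iff_nhdsWithin_neBot.mp hx₀
  have hbdd : BddAbove (Set.range fun x : s ↦ F x) := ⟨F x₀, by rintro _ ⟨x, rfl⟩; exact hle x x.2⟩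
  refine le_antisymm (ciSup_le fun x ↦ hle x x.2) (le_of_tendsto hF ?_)
  exact eventually_nhdsWithin_of_forall fun x hx ↦ le_ciSup hbdd ⟨x, hx⟩

-- `w = (β + i √(4|A|² - β²)) / 2A` is a root of modulus one by the quadratic formula.
theorem exists_norm_eq_one_mul_sq_sub_add_conj_eq_zero (A : ℂ) (β : ℝ) (h : |β| ≤ 2 * ‖A‖) :
    ∃ w : ℂ, ‖w‖ = 1 ∧ A * w ^ 2 - β * w + starRingEnd ℂ A = 0 := by
  rcases eq_or_ne A 0 with rfl | hA
  · refine ⟨1, norm_one, ?_⟩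
    have : β = 0 := abs_nonpos_iff.mp (by simpa using h)
    simp [this]
  set s := √(4 * ‖A‖ ^ 2 - β ^ 2)
  have hs : s ^ 2 = 4 * ‖A‖ ^ 2 - β ^ 2 :=
    Real.sq_sqrt (by nlinarith [abs_nonneg β, sq_abs β])
  have hnum : ‖(β + s * I : ℂ)‖ = 2 * ‖A‖ := by
    rw [← sq_eq_sq₀ (norm_nonneg _) (by positivity), ← normSq_eq_norm_sq,
      normSq_add_mul_I]
    linarith
  refine ⟨(β + s * I) / (2 * A), ?_, ?_⟩
  · rw [norm_div, hnum, norm_mul, Complex.norm_two]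
    exact div_self (by simpa using hA)
  · have hAA : A * starRingEnd ℂ A = 4⁻¹ * ((β : ℂ) ^ 2 + (s : ℂ) ^ 2) := by
      have : ‖A‖ ^ 2 = 4⁻¹ * (β ^ 2 + s ^ 2) := by rw [hs]; ring
      rw [mul_conj', ← ofReal_pow, this]
      push_cast
      ring
    field_simp
    linear_combination 4 * hAA + (s : ℂ) ^ 2 * I_sq

theorem exists_norm_eq_one_selfInversive_quadratic_eq_zero (A B μ : ℂ) (hμ : ‖μ‖ = 1)
    (hB : μ * starRingEnd ℂ B = B) (h : ‖B‖ ≤ 2 * ‖A‖) :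
    ∃ z : ℂ, ‖z‖ = 1 ∧ A * z ^ 2 - B * z + μ * starRingEnd ℂ A = 0 := by
  obtain ⟨e, he⟩ := IsAlgClosed.exists_pow_nat_eq μ two_pos
  have he₁ : ‖e‖ = 1 :=
    (pow_eq_one_iff_of_nonneg (norm_nonneg e) two_ne_zero).mp (by rw [← norm_pow, he, hμ])
  have hee : e * starRingEnd ℂ e = 1 := by simp [mul_conj', he₁]
  -- As `e² = μ` and `μ B̄ = B`, `B ē = B / e` is real: substituting `z = e w` leaves a real middle
  -- coefficient.
  set β := B * starRingEnd ℂ e with hβ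
  have hβ_real : (β.re : ℂ) = β := by
    refine conj_eq_iff_re.mp ?_
    rw [hβ, map_mul, conj_conj]
    linear_combination starRingEnd ℂ e * hB + starRingEnd ℂ B * starRingEnd ℂ e * he
      - starRingEnd ℂ B * e * hee
  have hβ_abs : |β.re| = ‖B‖ := by
    rw [← Real.norm_eq_abs, ← norm_real, hβ_real, hβ, norm_mul, norm_conj, he₁, mul_one]
  obtain ⟨w, hw, hroot⟩ := exists_norm_eq_one_mul_sq_sub_add_conj_eq_zero A β.re (hβ_abs ▸ h)
  refine ⟨e * w, by rw [norm_mul, he₁, hw, one_mul], ?_⟩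
  rw [hβ_real] at hroot
  linear_combination e ^ 2 * hroot - e ^ 2 * w * hβ + B * e * w * hee - starRingEnd ℂ A * he

theorem unitDisk_eq_ball : unitDisk = Metric.ball 0 1 := by
  ext z
  simp [unitDisk]

theorem norm_one_sub_conj_mul_sq_sub_norm_sub_sq (u z : ℂ) :
    ‖1 - starRingEnd ℂ u * z‖ ^ 2 - ‖z - u‖ ^ 2 = (1 - ‖u‖ ^ 2) * (1 - ‖z‖ ^ 2) := by
  simp only [← normSq_eq_norm_sq, normSq_apply, sub_re, sub_im, mul_re, mul_im, one_re, one_im,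
    conj_re, conj_im]
  ring

theorem norm_sub_le_norm_one_sub_conj_mul {u z : ℂ} (hu : ‖u‖ ≤ 1) (hz : ‖z‖ ≤ 1) :
    ‖z - u‖ ≤ ‖1 - starRingEnd ℂ u * z‖ := by
  refine (pow_le_pow_iff_left₀ (norm_nonneg _) (norm_nonneg _) two_ne_zero).mp ?_
  have := norm_one_sub_conj_mul_sq_sub_norm_sub_sq u z
  nlinarith [mul_nonneg (sub_nonneg.mpr (pow_le_one₀ (n := 2) (norm_nonneg u) hu))
    (sub_nonneg.mpr (pow_le_one₀ (n := 2) (norm_nonneg z) hz))]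

theorem norm_sub_eq_norm_one_sub_conj_mul (u : ℂ) {z : ℂ} (hz : ‖z‖ = 1) :
    ‖z - u‖ = ‖1 - starRingEnd ℂ u * z‖ := by
  refine (sq_eq_sq₀ (norm_nonneg _) (norm_nonneg _)).mp ?_
  linarith [hz ▸ norm_one_sub_conj_mul_sq_sub_norm_sub_sq u z]

theorem one_sub_conj_mul_ne_zero {u z : ℂ} (hu : ‖u‖ < 1) (hz : ‖z‖ ≤ 1) :
    1 - starRingEnd ℂ u * z ≠ 0 := by
  have : ‖starRingEnd ℂ u * z‖ < 1 := by
    rw [norm_mul, norm_conj]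
    exact mul_lt_one_of_nonneg_of_lt_one_left (norm_nonneg u) hu hz
  exact sub_ne_zero.mpr (ne_of_apply_ne norm (by rw [norm_one]; exact this.ne'))

theorem norm_autMap_le (ξ : ℝ) {u z : ℂ} (hu : ‖u‖ < 1) (hz : ‖z‖ ≤ 1) :
    ‖autMap ξ u z‖ ≤ 1 := by
  rw [autMap, norm_mul, norm_exp_I_mul_ofReal, one_mul, norm_div]
  exact div_le_one_of_le₀ (norm_sub_le_norm_one_sub_conj_mul hu.le hz) (norm_nonneg _)

theorem norm_autMap_eq_one (ξ : ℝ) {u z : ℂ} (hu : ‖u‖ < 1) (hz : ‖z‖ = 1) :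
    ‖autMap ξ u z‖ = 1 := by
  rw [autMap, norm_mul, norm_exp_I_mul_ofReal, one_mul, norm_div,
    norm_sub_eq_norm_one_sub_conj_mul u hz]
  exact div_self (norm_ne_zero_iff.mpr (one_sub_conj_mul_ne_zero hu hz.le))

theorem continuousAt_autMap (ξ : ℝ) {u z : ℂ} (h : 1 - starRingEnd ℂ u * z ≠ 0) :
    ContinuousAt (autMap ξ u) z :=
  continuousAt_const.mul ((continuousAt_id.sub continuousAt_const).div (by fun_prop) h)

theorem autMap_add_autMap_eq_zero {ξ η : ℝ} {u v z : ℂ} (hu : 1 - starRingEnd ℂ u * z ≠ 0)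
    (hv : 1 - starRingEnd ℂ v * z ≠ 0)
    (h : (z - u) * (1 - starRingEnd ℂ v * z)
      + exp (I * (η - ξ)) * ((z - v) * (1 - starRingEnd ℂ u * z)) = 0) :
    autMap ξ u z + autMap η v z = 0 := by
  have hexp : exp (I * η) = exp (I * ξ) * exp (I * (η - ξ)) := by rw [← exp_add]; ring_nf
  rw [autMap, autMap, hexp, mul_assoc, ← mul_add, mul_div_assoc', div_add_div _ _ hu hv,
    mul_eq_zero, div_eq_zero_iff]
  exact Or.inr (Or.inl (by linear_combination h))

theorem norm_sq_sub_four_mul_norm_sq {μ : ℂ} (hμ : ‖μ‖ = 1) (u v : ℂ) :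
    ‖1 + μ + u * starRingEnd ℂ v + μ * starRingEnd ℂ u * v‖ ^ 2
        - 4 * ‖starRingEnd ℂ v + μ * starRingEnd ℂ u‖ ^ 2
      = ‖μ * (1 - starRingEnd ℂ u * v) + (1 - u * starRingEnd ℂ v)‖ ^ 2
        - 4 * ‖u - v‖ ^ 2 := by
  have hμ' : μ * starRingEnd ℂ μ = 1 := by simp [mul_conj', hμ]
  apply ofReal_injective
  push_cast
  simp only [← mul_conj', map_add, map_sub, map_mul, map_one, conj_conj]
  linear_combination (2 * (starRingEnd ℂ u * v + u * starRingEnd ℂ v)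
    - 4 * u * starRingEnd ℂ u) * hμ'

theorem norm_mul_add_le_two_mul_norm_sub_of_le_pseudoHyp {μ u v : ℂ}
    (hd : 1 - starRingEnd ℂ u * v ≠ 0)
    (h : ‖μ * ((1 - starRingEnd ℂ u * v) / (1 - u * starRingEnd ℂ v)) + 1‖
      ≤ 2 * pseudoHyp u v) :
    ‖μ * (1 - starRingEnd ℂ u * v) + (1 - u * starRingEnd ℂ v)‖ ≤ 2 * ‖u - v‖ := by
  have hconj : 1 - u * starRingEnd ℂ v = starRingEnd ℂ (1 - starRingEnd ℂ u * v) := by simp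
  have hd' : 1 - u * starRingEnd ℂ v ≠ 0 := by rw [hconj]; exact (map_ne_zero _).mpr hd
  have hnorm : ‖1 - u * starRingEnd ℂ v‖ = ‖1 - starRingEnd ℂ u * v‖ := by rw [hconj, norm_conj]
  have hsum : μ * ((1 - starRingEnd ℂ u * v) / (1 - u * starRingEnd ℂ v)) + 1
      = (μ * (1 - starRingEnd ℂ u * v) + (1 - u * starRingEnd ℂ v))
        / (1 - u * starRingEnd ℂ v) := by
    field_simp
  rwa [hsum, pseudoHyp, norm_div, norm_div, hnorm, ← mul_div_assoc,
    div_le_div_iff_of_pos_right (norm_pos_iff.mpr hd)] at h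

theorem exists_norm_eq_one_autMap_add_autMap_eq_zero (ξ η : ℝ) {u v : ℂ} (hu : ‖u‖ < 1)
    (hv : ‖v‖ < 1)
    (h : ‖exp (I * (η - ξ)) * (1 - starRingEnd ℂ u * v) + (1 - u * starRingEnd ℂ v)‖
      ≤ 2 * ‖u - v‖) :
    ∃ z : ℂ, ‖z‖ = 1 ∧ autMap ξ u z + autMap η v z = 0 := by
  set μ := exp (I * (η - ξ))
  have hμ : ‖μ‖ = 1 := by simpa using norm_exp_I_mul_ofReal (η - ξ)
  have hμ' : μ * starRingEnd ℂ μ = 1 := by simp [mul_conj', hμ]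
  have hBA : ‖1 + μ + u * starRingEnd ℂ v + μ * starRingEnd ℂ u * v‖
      ≤ 2 * ‖starRingEnd ℂ v + μ * starRingEnd ℂ u‖ := by
    refine (pow_le_pow_iff_left₀ (norm_nonneg _) (by positivity) two_ne_zero).mp ?_
    nlinarith [norm_sq_sub_four_mul_norm_sq hμ u v, pow_le_pow_left₀ (norm_nonneg _) h 2]
  obtain ⟨z, hz, hroot⟩ := exists_norm_eq_one_selfInversive_quadratic_eq_zero _ _ μ hμ
    (by simp only [map_add, map_mul, map_one, conj_conj]
        linear_combination (1 + u * starRingEnd ℂ v) * hμ') hBA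
  refine ⟨z, hz, autMap_add_autMap_eq_zero (one_sub_conj_mul_ne_zero hu hz.le)
    (one_sub_conj_mul_ne_zero hv hz.le) ?_⟩
  simp only [map_add, map_mul, conj_conj] at hroot
  linear_combination -hroot + u * hμ'

theorem dist_eq_two_case
    (ξ η : ℝ) (u v : ℂ) (hu : u ∈ unitDisk) (hv : v ∈ unitDisk)
    (hcond : ‖(Complex.exp (Complex.I * (η - ξ))
          * ((1 - (starRingEnd ℂ) u * v) / (1 - u * (starRingEnd ℂ) v)) + 1)‖
      ≤ 2 * pseudoHyp u v) :
    (⨆ z : unitDisk, ‖autMap ξ u z - autMap η v z‖) = 2 := by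
  obtain ⟨z₀, hz₀, hsum⟩ := exists_norm_eq_one_autMap_add_autMap_eq_zero ξ η hu hv
    (norm_mul_add_le_two_mul_norm_sub_of_le_pseudoHyp (one_sub_conj_mul_ne_zero hu hv.le) hcond)
  have hmax : ‖autMap ξ u z₀ - autMap η v z₀‖ = 2 := by
    rw [eq_neg_of_add_eq_zero_right hsum, sub_neg_eq_add, ← two_mul, norm_mul,
      norm_autMap_eq_one ξ hu hz₀, Complex.norm_two, mul_one]
  rw [← hmax]
  refine ContinuousWithinAt.ciSup_eq_of_forall_le (F := fun z ↦ ‖autMap ξ u z - autMap η v z‖)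
    ?_ ?_ fun z hz ↦ ?_
  · exact ((continuousAt_autMap ξ (one_sub_conj_mul_ne_zero hu hz₀.le)).sub
      (continuousAt_autMap η (one_sub_conj_mul_ne_zero hv hz₀.le))).norm.continuousWithinAt
  · rw [unitDisk_eq_ball, closure_ball _ one_ne_zero, mem_closedBall_zero_iff, hz₀]
  · rw [hmax]
    exact (norm_sub_le _ _).trans
      (by linarith [norm_autMap_le ξ hu hz.le, norm_autMap_le η hv hz.le])
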